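/- arXiv:2502.14863 — 4 statements merged into one kernel-verified Lean document; each statement's English description precedes it below -/
import Mathlib

section
/- The sum over all compositions (m_1,...,m_n) of n (i.e. nonnegative integers with Σ_{k=1}^n k·m_k = n) of Π_{k=1}^n (θ/k)^{m_k}/m_k! equals the binomial coefficient C(n+θ-1, θ-1). -/
/-!
Write `a_d` for the weighted sum over multiplicity vectors of size `d`. Since every vector of size
`d` satisfies `d = ∑ k m_k`, and deleting one part of size `k` from it multiplies its weight by
`k m_k / θ`, one gets `d a_d = θ ∑_{j<d} a_j` as long as all part sizes up to `d` are allowed. The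
ratio `Γ(d+θ)/(Γ(θ) d!)` satisfies `(d+1) b_{d+1} = (d+θ) b_d`, which telescopes to the same
recursion, and both sequences start at `1`.
-/

lemma natCast_mul_eq_mul_sum_range_of_succ_mul {b : ℕ → ℝ} {c : ℝ}
    (hb : ∀ d : ℕ, (d + 1 : ℝ) * b (d + 1) = (d + c) * b d) (d : ℕ) :
    d * b d = c * ∑ j ∈ Finset.range d, b j := by
  induction d with
  | zero => simp
  | succ d ih =>
    rw [Finset.sum_range_succ, mul_add, ← ih]
    push_cast
    rw [hb]
    ring

lemma eq_of_natCast_mul_eq_mul_sum_range {a b : ℕ → ℝ} {c : ℝ} {N : ℕ} (h0 : a 0 = b 0)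
    (ha : ∀ d ≤ N, d * a d = c * ∑ j ∈ Finset.range d, a j)
    (hb : ∀ d ≤ N, d * b d = c * ∑ j ∈ Finset.range d, b j) :
    ∀ d ≤ N, a d = b d := by
  intro d
  induction d using Nat.strong_induction_on with
  | _ d ih =>
    intro hd
    rcases d.eq_zero_or_pos with rfl | hpos
    · exact h0
    · have hsum : ∑ j ∈ Finset.range d, a j = ∑ j ∈ Finset.range d, b j :=
        Finset.sum_congr rfl fun j hj =>
          ih j (Finset.mem_range.1 hj) ((Finset.mem_range.1 hj).le.trans hd)
      exact mul_left_cancel₀ (Nat.cast_ne_zero.2 hpos.ne') (by rw [ha d hd, hb d hd, hsum])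

open Finset

namespace Ewens

variable {N : ℕ}

/-- `m k` is the number of parts of size `k + 1`. -/
def size (m : Fin N → ℕ) : ℕ := ∑ k, (k.1 + 1) * m k

lemma mul_le_size (m : Fin N → ℕ) (k : Fin N) : (k.1 + 1) * m k ≤ size m :=
  single_le_sum (f := fun j : Fin N => (j.1 + 1) * m j) (fun _ _ => Nat.zero_le _) (mem_univ k)

lemma le_size (m : Fin N → ℕ) (k : Fin N) : m k ≤ size m :=
  (Nat.le_mul_of_pos_left _ k.1.succ_pos).trans (mul_le_size m k)

lemma size_add_single (m : Fin N → ℕ) (k : Fin N) :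
    size (m + Pi.single k 1) = size m + (k.1 + 1) := by
  simp [size, mul_add, sum_add_distrib, Pi.single_apply]

def multiplicityVectors (N d : ℕ) : Finset (Fin N → ℕ) :=
  (Fintype.piFinset fun _ => range (d + 1)).filter fun m => size m = d

lemma mem_multiplicityVectors {d : ℕ} {m : Fin N → ℕ} :
    m ∈ multiplicityVectors N d ↔ size m = d := by
  simp only [multiplicityVectors, mem_filter, Fintype.mem_piFinset, mem_range,
    and_iff_right_iff_imp]
  rintro rfl k
  exact Nat.lt_succ_of_le (le_size m k)

lemma multiplicityVectors_zero : multiplicityVectors N 0 = {0} := by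
  ext m
  simp only [mem_multiplicityVectors, size, sum_eq_zero_iff, mem_univ, true_implies,
    mul_eq_zero, Nat.add_one_ne_zero, false_or, mem_singleton, funext_iff, Pi.zero_apply]

variable (θ : ℝ)

noncomputable def weight (m : Fin N → ℕ) : ℝ :=
  ∏ k : Fin N, (θ / (k.1 + 1)) ^ m k / ((m k).factorial : ℝ)

lemma mul_weight_add_single (m : Fin N → ℕ) (k : Fin N) :
    ((k.1 + 1) * (m k + 1) : ℝ) * weight θ (m + Pi.single k 1) = θ * weight θ m := by
  classical
  have hrest : ∀ j ∈ ({k}ᶜ : Finset (Fin N)), (m + Pi.single k 1 : Fin N → ℕ) j = m j :=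
    fun j hj => by simp_all
  rw [weight, weight, Fintype.prod_eq_mul_prod_compl k, Fintype.prod_eq_mul_prod_compl k,
    prod_congr rfl fun j hj => by rw [hrest j hj]]
  simp only [Pi.add_apply, Pi.single_eq_same, pow_succ, Nat.factorial_succ, Nat.cast_mul]
  push_cast
  field_simp

noncomputable def weightSum (N d : ℕ) : ℝ := ∑ m ∈ multiplicityVectors N d, weight θ m

lemma weightSum_zero : weightSum θ N 0 = 1 := by
  simp [weightSum, multiplicityVectors_zero, weight]

lemma sum_mul_weight_eq_mul_weightSum (k : Fin N) (d : ℕ) :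
    ∑ m ∈ multiplicityVectors N (d + (k.1 + 1)), ((k.1 + 1) * m k : ℝ) * weight θ m
      = θ * weightSum θ N d := by
  symm
  rw [weightSum, mul_sum]
  refine sum_bij_ne_zero (fun m _ _ => m + Pi.single k 1) ?_ ?_ ?_ ?_
  · intro m hm _
    rw [mem_multiplicityVectors, size_add_single, mem_multiplicityVectors.1 hm]
  · intro _ _ _ _ _ _ h
    exact add_right_cancel h
  · intro m hm hterm
    have hmk : 1 ≤ m k := Nat.one_le_iff_ne_zero.2 fun h => hterm (by simp [h])
    have hm' : m - Pi.single k 1 + Pi.single k 1 = m := by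
      ext j
      rcases eq_or_ne j k with rfl | hj
      · simp [Nat.sub_add_cancel hmk]
      · simp [hj]
    refine ⟨m - Pi.single k 1, ?_, ?_, hm'⟩
    · rw [mem_multiplicityVectors]
      have := size_add_single (m - Pi.single k 1) k
      rw [hm', mem_multiplicityVectors.1 hm] at this
      omega
    · rw [← mul_weight_add_single, hm']
      convert hterm using 3
      simp [Nat.cast_sub hmk]
  · intro m _ _
    rw [← mul_weight_add_single θ m k]
    simp

lemma natCast_mul_weightSum {d : ℕ} (hd : d ≤ N) :
    d * weightSum θ N d = θ * ∑ j ∈ range d, weightSum θ N j := by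
  have hsize : ∀ m ∈ multiplicityVectors N d,
      (d : ℝ) * weight θ m = ∑ k : Fin N, ((k.1 + 1) * m k : ℝ) * weight θ m := by
    intro m hm
    rw [← sum_mul, ← (mem_multiplicityVectors.1 hm)]
    simp [size]
  have hvanish : ∀ k : Fin N, d ≤ k.1 →
      ∑ m ∈ multiplicityVectors N d, ((k.1 + 1) * m k : ℝ) * weight θ m = 0 := by
    intro k hk
    refine sum_eq_zero fun m hm => ?_
    have := mul_le_size m k
    rw [mem_multiplicityVectors.1 hm] at this
    have : m k = 0 := by nlinarith
    simp [this]
  calc (d : ℝ) * weightSum θ N d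
      = ∑ k : Fin N, ∑ m ∈ multiplicityVectors N d, ((k.1 + 1) * m k : ℝ) * weight θ m := by
        rw [weightSum, mul_sum, sum_congr rfl hsize, sum_comm]
    _ = ∑ k : Fin N, if k.1 < d then θ * weightSum θ N (d - 1 - k.1) else 0 := by
        refine sum_congr rfl fun k _ => ?_
        split_ifs with hk
        · rw [← sum_mul_weight_eq_mul_weightSum, show d - 1 - k.1 + (k.1 + 1) = d by omega]
        · exact hvanish k (not_lt.1 hk)
    _ = ∑ i ∈ range d, θ * weightSum θ N (d - 1 - i) := by
        rw [Fin.sum_univ_eq_sum_range (fun i => if i < d then θ * weightSum θ N (d - 1 - i) else 0),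
          ← sum_filter]
        congr 1
        ext i
        simp only [mem_filter, mem_range]
        omega
    _ = θ * ∑ j ∈ range d, weightSum θ N j := by
        rw [← mul_sum, sum_range_reflect (weightSum θ N)]

lemma sum_fin_eq_weightSum {M d : ℕ} (hd : d < M) :
    ∑ m ∈ (Finset.univ : Finset (Fin N → Fin M)).filter
        (fun m => ∑ k : Fin N, (k.1 + 1) * (m k).1 = d),
      ∏ k : Fin N, (θ / (k.1 + 1)) ^ ((m k : ℕ)) / ((m k : ℕ).factorial : ℝ)
      = weightSum θ N d := by
  refine sum_bij (fun m _ k => (m k : ℕ)) ?_ ?_ ?_ fun _ _ => rfl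
  · intro m hm
    exact mem_multiplicityVectors.2 (mem_filter.1 hm).2
  · intro _ _ _ _ h
    funext k
    exact Fin.ext (congrFun h k)
  · intro m hm
    have hm := mem_multiplicityVectors.1 hm
    refine ⟨fun k => ⟨m k, (le_size m k).trans_lt (hm ▸ hd)⟩, ?_, rfl⟩
    exact mem_filter.2 ⟨mem_univ _, hm⟩

noncomputable def normalization (d : ℕ) : ℝ :=
  Real.Gamma (d + θ) / (Real.Gamma θ * d.factorial)

lemma normalization_zero (hΓ : Real.Gamma θ ≠ 0) : normalization θ 0 = 1 := by
  simp [normalization, hΓ]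

lemma succ_mul_normalization_succ {d : ℕ} (hd : (d : ℝ) + θ ≠ 0) :
    (d + 1 : ℝ) * normalization θ (d + 1) = (d + θ) * normalization θ d := by
  have hΓ : Real.Gamma ((d + 1 : ℕ) + θ) = (d + θ) * Real.Gamma (d + θ) := by
    rw [← Real.Gamma_add_one hd]
    push_cast
    ring_nf
  rw [normalization, normalization, hΓ, Nat.factorial_succ]
  push_cast
  rcases eq_or_ne (Real.Gamma θ) 0 with h | h
  · simp [h]
  · field_simp

end Ewens

theorem sum_over_compositions_eq_ewens_normalization_general (θ : ℝ) (hθ : 0 < θ) (n : ℕ) :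
    ∑ m ∈ (Finset.univ : Finset (Fin n → Fin (n + 1))).filter
        (fun m => ∑ k : Fin n, (k.1 + 1) * (m k).1 = n),
      ∏ k : Fin n, (θ / (k.1 + 1)) ^ ((m k : ℕ)) / ((m k : ℕ).factorial : ℝ)
      = Real.Gamma (n + θ) / (Real.Gamma θ * n.factorial) := by
  rw [Ewens.sum_fin_eq_weightSum θ n.lt_succ_self]
  refine eq_of_natCast_mul_eq_mul_sum_range (c := θ) (b := Ewens.normalization θ) ?_
    (fun d hd => Ewens.natCast_mul_weightSum θ hd)
    (fun d _ => natCast_mul_eq_mul_sum_range_of_succ_mul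
      (fun d => Ewens.succ_mul_normalization_succ θ (by positivity)) d) n le_rfl
  rw [Ewens.weightSum_zero, Ewens.normalization_zero θ (Real.Gamma_pos_of_pos hθ).ne']

/-- The sum over all compositions `(m_1,…,m_n)` of `n` (nonnegative integers with
`∑_{k=1}^n k m_k = n`) of `∏_{k=1}^n (θ/k)^{m_k}/m_k!` equals the generalized
binomial coefficient `C(n+θ-1, θ-1) = Γ(n+θ)/(Γ(θ) n!)`. -/
theorem sum_over_compositions_eq_ewens_normalization (θ : ℝ) (hθ : 0 < θ) (n : ℕ)
    (hn : 0 < n) :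
    ∑ m ∈ (Finset.univ : Finset (Fin n → Fin (n + 1))).filter
        (fun m => ∑ k : Fin n, (k.1 + 1) * (m k).1 = n),
      ∏ k : Fin n, (θ / (k.1 + 1)) ^ ((m k : ℕ)) / ((m k : ℕ).factorial : ℝ)
      = Real.Gamma (n + θ) / (Real.Gamma θ * n.factorial) :=
  sum_over_compositions_eq_ewens_normalization_general θ hθ n
end

section
/- For x > 0 and θ ∈ (0,1), the ratio Γ(x+θ)/Γ(x+1) is strictly less than x^{θ-1}. -/
/-!
Log-convexity of `Γ` between `x + 1` and `x + 2` gives Wendel's bound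
`Γ(x + 1 + θ) ≤ (x + 1)^θ Γ(x + 1)`, i.e. `Γ(x + θ) / Γ(x + 1) ≤ (x + 1)^θ / (x + θ)`.
Strictness comes from the other side: `x^(1-θ) (x + 1)^θ < x + θ` is the strict weighted
AM-GM inequality for the distinct numbers `x` and `x + 1`.
-/

open Real Set

theorem Real.Gamma_add_le_rpow_mul_Gamma {y θ : ℝ} (hy : 0 < y) (hθ : θ ∈ Icc (0 : ℝ) 1) :
    Gamma (y + θ) ≤ y ^ θ * Gamma y := by
  obtain ⟨hθ0, hθ1⟩ := hθ
  rcases hθ0.eq_or_lt with rfl | hθ0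
  · simp
  rcases hθ1.eq_or_lt with rfl | hθ1
  · rw [rpow_one, Gamma_add_one hy.ne']
  have hGy := Gamma_pos_of_pos hy
  calc Gamma (y + θ) = Gamma ((1 - θ) * y + θ * (y + 1)) := by ring_nf
    _ ≤ Gamma y ^ (1 - θ) * Gamma (y + 1) ^ θ :=
      Gamma_mul_add_mul_le_rpow_Gamma_mul_rpow_Gamma hy (by linarith) (by linarith) hθ0
        (by ring)
    _ = y ^ θ * Gamma y := by
      rw [Gamma_add_one hy.ne', mul_rpow hy.le hGy.le, ← mul_assoc, mul_comm _ (y ^ θ),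
        mul_assoc, ← rpow_add hGy, sub_add_cancel, rpow_one]

theorem Real.rpow_div_add_lt_rpow_sub_one {x θ : ℝ} (hx : 0 < x) (hθ : θ ∈ Ioo (0 : ℝ) 1) :
    (x + 1) ^ θ / (x + θ) < x ^ (θ - 1) := by
  obtain ⟨hθ0, hθ1⟩ := hθ
  have amgm : x ^ (1 - θ) * (x + 1) ^ θ < (1 - θ) * x + θ * (x + 1) :=
    (geom_mean_lt_arith_mean2_weighted_iff_of_pos (by linarith) hθ0 hx.le (by linarith)
      (by ring)).2 (by linarith)
  have hsplit : x ^ θ * x ^ (1 - θ) = x := by rw [← rpow_add hx, add_sub_cancel, rpow_one]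
  rw [div_lt_iff₀ (by linarith), rpow_sub hx, rpow_one, div_mul_eq_mul_div, lt_div_iff₀ hx]
  calc (x + 1) ^ θ * x = x ^ θ * (x ^ (1 - θ) * (x + 1) ^ θ) := by
        rw [← mul_assoc, hsplit, mul_comm]
    _ < x ^ θ * (x + θ) := by gcongr; linarith

/-- For `x > 0` and `θ ∈ (0,1)`, the ratio `Γ(x+θ)/Γ(x+1)` is strictly less than
`x^(θ-1)`. -/
theorem gamma_ratio_lt_rpow (x θ : ℝ) (hx : 0 < x) (hθ : θ ∈ Set.Ioo (0 : ℝ) 1) :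
    Real.Gamma (x + θ) / Real.Gamma (x + 1) < x ^ (θ - 1) := by
  have hGx1 := Gamma_pos_of_pos (by linarith : 0 < x + 1)
  have wendel : Gamma (x + θ) * (x + θ) ≤ (x + 1) ^ θ * Gamma (x + 1) := by
    rw [mul_comm, ← Gamma_add_one (by linarith [hθ.1]), add_right_comm]
    exact Gamma_add_le_rpow_mul_Gamma (by linarith) (Ioo_subset_Icc_self hθ)
  calc Gamma (x + θ) / Gamma (x + 1) ≤ (x + 1) ^ θ / (x + θ) := by
        rw [div_le_div_iff₀ hGx1 (by linarith [hθ.1])]; exact wendel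
    _ < x ^ (θ - 1) := rpow_div_add_lt_rpow_sub_one hx hθ
end

section
/- The density p_θ of the limit of T_{0n}/n satisfies the tail bound sup_{y ≥ m} p_θ(y) ≤ θ^m/m! for every positive integer m; in particular p_θ(1/δ)·δ^{θ-1} → 0 super-polynomially fast as δ → 0 for any fixed θ > 0. -/
/-
Write `c_k = P(T_{0n} = k)`. Differentiating `∑ c_k z^k = exp (∑_{j ≤ n} θ/j (z^j - 1))` and
comparing coefficients gives the size-bias recurrence `r c_r = θ P(r - n ≤ T_{0n} < r)`.
Feeding a bound for `c` on the window `[r - n, r)` back into it shows by induction on `m` that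
`n c_r ≤ θ^m/m!` whenever `r ≥ m n`, and this passes to the limit `p_θ(y)` along `r = ⌊y n⌋`.
The decay follows since `θ^m/m!` beats every power of `m`.
-/

open MeasureTheory Filter Set Topology FormalMultilinearSeries

lemma summable_norm_mul_pow_of_abs_le {A : ℝ} {b : ℕ → ℝ} (hb : ∀ k, |b k| ≤ A * (k + 1))
    {x : ℝ} (hx : |x| < 1) : Summable fun k => ‖b k * x ^ k‖ := by
  have hlin : Summable fun k : ℕ => A * ((k : ℝ) ^ 1 * |x| ^ k + |x| ^ k) :=
    ((summable_pow_mul_geometric_of_norm_lt_one 1 (by simpa using hx)).add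
      (summable_geometric_of_lt_one (abs_nonneg x) hx)).mul_left A
  refine hlin.of_nonneg_of_le (fun _ => norm_nonneg _) fun k => ?_
  rw [Real.norm_eq_abs, abs_mul, abs_pow]
  calc |b k| * |x| ^ k ≤ A * (k + 1) * |x| ^ k := by gcongr; exact hb k
    _ = A * ((k : ℝ) ^ 1 * |x| ^ k + |x| ^ k) := by ring

lemma hasFPowerSeriesAt_tsum_mul_pow {A : ℝ} {a : ℕ → ℝ} (ha : ∀ k, |a k| ≤ A * (k + 1)) :
    HasFPowerSeriesAt (fun x => ∑' k, a k * x ^ k) (ofScalars ℝ a) 0 := by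
  have hrad : ((2⁻¹ : NNReal) : ENNReal) ≤ (ofScalars ℝ a).radius := by
    refine le_radius_of_summable _ ?_
    simpa [ofScalars_norm, abs_mul] using
      summable_norm_mul_pow_of_abs_le ha (x := 2⁻¹) (by norm_num [abs_of_pos])
  have hsum : (ofScalars ℝ a).sum = fun x => ∑' k, a k * x ^ k :=
    funext fun x => ofScalars_sum_eq a x
  simpa only [hsum] using
    ((ofScalars ℝ a).hasFPowerSeriesOnBall (lt_of_lt_of_le (by simp) hrad)).hasFPowerSeriesAt

lemma eq_of_tsum_mul_pow_eventuallyEq {A B : ℝ} {a b : ℕ → ℝ} (ha : ∀ k, |a k| ≤ A * (k + 1))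
    (hb : ∀ k, |b k| ≤ B * (k + 1))
    (h : ∀ᶠ x in 𝓝[>] 0, ∑' k, a k * x ^ k = ∑' k, b k * x ^ k) : a = b := by
  have hA := hasFPowerSeriesAt_tsum_mul_pow ha
  have hB := hasFPowerSeriesAt_tsum_mul_pow hb
  have hfreq : ∃ᶠ x in 𝓝[≠] (0 : ℝ), ∑' k, a k * x ^ k = ∑' k, b k * x ^ k :=
    h.frequently.filter_mono (nhdsWithin_mono _ fun x hx => ne_of_gt hx)
  have hev := (hA.analyticAt.frequently_eq_iff_eventually_eq hB.analyticAt).1 hfreq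
  exact ofScalars_series_injective ℝ ℝ
    (hA.eq_formalMultilinearSeries (hB.congr (EventuallyEq.symm hev)))

lemma tsum_mul_pow_mul_tsum_mul_pow {a b : ℕ → ℝ} {x : ℝ} (ha : Summable fun k => ‖a k * x ^ k‖)
    (hb : Summable fun k => ‖b k * x ^ k‖) :
    (∑' k, a k * x ^ k) * (∑' k, b k * x ^ k) =
      ∑' k, (∑ i ∈ Finset.range (k + 1), a i * b (k - i)) * x ^ k := by
  rw [tsum_mul_tsum_eq_tsum_sum_antidiagonal_of_summable_norm ha hb]
  refine tsum_congr fun k => ?_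
  rw [Finset.Nat.sum_antidiagonal_eq_sum_range_succ (fun i j => a i * x ^ i * (b j * x ^ j)),
    Finset.sum_mul]
  refine Finset.sum_congr rfl fun i hi => ?_
  rw [← Nat.add_sub_cancel' (Finset.mem_range_succ_iff.mp hi), pow_add, Nat.add_sub_cancel_left]
  ring

lemma hasDerivAt_tsum_mul_pow {C : ℝ} {c : ℕ → ℝ} (hc : ∀ k, |c k| ≤ C) {x : ℝ} (hx : |x| < 1) :
    HasDerivAt (fun z => ∑' k, c k * z ^ k) (∑' k : ℕ, ((k : ℝ) + 1) * c (k + 1) * x ^ k) x := by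
  obtain ⟨r, hxr, hr1⟩ := exists_between hx
  have hr0 : 0 < r := (abs_nonneg x).trans_lt hxr
  have hC : 0 ≤ C := (abs_nonneg _).trans (hc 0)
  have hu : Summable fun k : ℕ => C / r * ((k : ℝ) ^ 1 * r ^ k) :=
    (summable_pow_mul_geometric_of_norm_lt_one 1 (by rwa [Real.norm_of_nonneg hr0.le])).mul_left
      (C / r)
  have hderiv_le : ∀ k, ∀ y ∈ Metric.ball (0 : ℝ) r,
      ‖c k * (k * y ^ (k - 1))‖ ≤ C / r * ((k : ℝ) ^ 1 * r ^ k) := by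
    intro k y hy
    rw [mem_ball_zero_iff, Real.norm_eq_abs] at hy
    rcases k with _ | k
    · simp
    simp only [Nat.add_sub_cancel, pow_one, Real.norm_eq_abs, abs_mul, abs_pow, Nat.abs_cast]
    calc |c (k + 1)| * ((k + 1 : ℕ) * |y| ^ k) ≤ C * ((k + 1 : ℕ) * r ^ k) := by
          gcongr; exact hc _
      _ = C / r * ((k + 1 : ℕ) * r ^ (k + 1)) := by field_simp; ring
  have hsum0 : Summable fun k => c k * (0 : ℝ) ^ k :=
    (hasSum_single 0 fun k hk => by simp [hk]).summable
  have key := hasDerivAt_tsum_of_isPreconnected hu Metric.isOpen_ball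
    (convex_ball (0 : ℝ) r).isPreconnected (g := fun k z => c k * z ^ k)
    (fun k y _ => (hasDerivAt_pow k y).const_mul (c k)) hderiv_le (Metric.mem_ball_self hr0)
    hsum0 (by simpa using hxr)
  refine key.congr_deriv ?_
  rw [Summable.tsum_eq_zero_add (.of_norm_bounded hu fun k => hderiv_le k x (by simpa using hxr))]
  simp only [CharP.cast_eq_zero, zero_mul, mul_zero, zero_add, Nat.add_sub_cancel, Nat.cast_succ]
  exact tsum_congr fun k => by ring

lemma hasDerivAt_prod_exp_mul_pow_sub_one (θ : ℝ) (n : ℕ) (x : ℝ) :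
    HasDerivAt (fun z => ∏ j ∈ Finset.Icc 1 n, Real.exp (θ / j * (z ^ j - 1)))
      ((∏ j ∈ Finset.Icc 1 n, Real.exp (θ / j * (x ^ j - 1))) *
        (θ * ∑ i ∈ Finset.range n, x ^ i)) x := by
  have hsum (n : ℕ) :
      ∑ j ∈ Finset.Icc 1 n, θ / j * (j * x ^ (j - 1)) = θ * ∑ i ∈ Finset.range n, x ^ i := by
    induction n with
    | zero => simp
    | succ n ih =>
      rw [Finset.sum_Icc_succ_top (by omega), ih, Finset.sum_range_succ, Nat.add_sub_cancel]
      field_simp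
  simp only [← Real.exp_sum]
  exact (hsum n ▸ HasDerivAt.fun_sum fun j _ =>
    ((hasDerivAt_pow j x).sub_const 1).const_mul (θ / j)).exp

lemma add_one_mul_eq_sum_of_tsum_eq_prod_exp {θ : ℝ} {n : ℕ} {c : ℕ → ℝ}
    (hc : ∀ k, |c k| ≤ 1)
    (hpgf : ∀ z ∈ Ioo (0 : ℝ) 1,
      ∑' k, c k * z ^ k = ∏ j ∈ Finset.Icc 1 n, Real.exp (θ / j * (z ^ j - 1))) (k : ℕ) :
    ((k : ℝ) + 1) * c (k + 1) =
      ∑ i ∈ Finset.range (k + 1), c i * if k - i < n then θ else 0 := by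
  set q : ℕ → ℝ := fun i => if i < n then θ else 0
  have hq : ∀ i, |q i| ≤ |θ| := fun i => by simp only [q]; split_ifs <;> simp
  have linear {C : ℝ} {d : ℕ → ℝ} (hd : ∀ k, |d k| ≤ C) (k : ℕ) : |d k| ≤ C * (k + 1) :=
    (hd k).trans <| le_mul_of_one_le_right ((abs_nonneg _).trans (hd 0))
      (le_add_of_nonneg_left k.cast_nonneg)
  refine congrFun (eq_of_tsum_mul_pow_eventuallyEq (A := 1) (B := |θ|)
    (a := fun k : ℕ => ((k : ℝ) + 1) * c (k + 1))
    (b := fun k => ∑ i ∈ Finset.range (k + 1), c i * q (k - i)) (fun k => ?_) (fun k => ?_) ?_) k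
  · rw [abs_mul, one_mul, abs_of_nonneg (by positivity)]
    exact mul_le_of_le_one_right (by positivity) (hc _)
  · calc |∑ i ∈ Finset.range (k + 1), c i * q (k - i)|
        ≤ ∑ i ∈ Finset.range (k + 1), |c i * q (k - i)| := Finset.abs_sum_le_sum_abs _ _
      _ ≤ (Finset.range (k + 1)).card • |θ| := Finset.sum_le_card_nsmul _ _ _ fun i _ => by
          rw [abs_mul]; simpa using mul_le_mul (hc i) (hq _) (abs_nonneg _) zero_le_one
      _ = |θ| * (k + 1) := by simp [mul_comm]
  filter_upwards [Ioo_mem_nhdsGT (zero_lt_one' ℝ)] with x hx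
  have hx1 : |x| < 1 := by rw [abs_of_pos hx.1]; exact hx.2
  have hfg : (fun z => ∑' k, c k * z ^ k) =ᶠ[𝓝 x]
      fun z => ∏ j ∈ Finset.Icc 1 n, Real.exp (θ / j * (z ^ j - 1)) :=
    eventually_of_mem (Ioo_mem_nhds hx.1 hx.2) hpgf
  have hQ : θ * ∑ i ∈ Finset.range n, x ^ i = ∑' i, q i * x ^ i := by
    rw [tsum_eq_sum (s := Finset.range n) fun i hi => by simp [q, Finset.mem_range.not.mp hi],
      Finset.mul_sum]
    exact Finset.sum_congr rfl fun i hi => by simp [q, Finset.mem_range.mp hi]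
  rw [(hasDerivAt_tsum_mul_pow hc hx1).unique
    ((hasDerivAt_prod_exp_mul_pow_sub_one θ n x).congr_of_eventuallyEq hfg), ← hpgf x hx, hQ,
    tsum_mul_pow_mul_tsum_mul_pow (summable_norm_mul_pow_of_abs_le (linear hc) hx1)
      (summable_norm_mul_pow_of_abs_le (linear hq) hx1)]

/-- For `r < n` the truncated `r - n = 0` is the right lower end of the window. -/
lemma mul_eq_mul_sum_Ico_of_tsum_eq_prod_exp {θ : ℝ} {n : ℕ} {c : ℕ → ℝ}
    (hc : ∀ k, |c k| ≤ 1)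
    (hpgf : ∀ z ∈ Ioo (0 : ℝ) 1,
      ∑' k, c k * z ^ k = ∏ j ∈ Finset.Icc 1 n, Real.exp (θ / j * (z ^ j - 1))) (r : ℕ) :
    r * c r = θ * ∑ l ∈ Finset.Ico (r - n) r, c l := by
  rcases r with _ | k
  · simp
  have hwindow : (Finset.range (k + 1)).filter (fun i => k - i < n) =
      Finset.Ico (k + 1 - n) (k + 1) := by
    ext i; simp only [Finset.mem_filter, Finset.mem_range, Finset.mem_Ico]; omega
  rw [Nat.cast_succ, add_one_mul_eq_sum_of_tsum_eq_prod_exp hc hpgf k, ← hwindow,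
    Finset.sum_filter, Finset.mul_sum]
  exact Finset.sum_congr rfl fun i _ => by split_ifs <;> ring

lemma mul_le_pow_div_factorial_of_recurrence {θ : ℝ} (hθ : 0 ≤ θ) {n : ℕ} (hn : 0 < n)
    {c : ℕ → ℝ} (hc : ∀ k, 0 ≤ c k) (hmass : ∀ s : Finset ℕ, ∑ l ∈ s, c l ≤ 1)
    (hrec : ∀ r : ℕ, r * c r = θ * ∑ l ∈ Finset.Ico (r - n) r, c l) {m : ℕ} (hm : 1 ≤ m) {r : ℕ}
    (hr : m * n ≤ r) : n * c r ≤ θ ^ m / m.factorial := by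
  have step {m r : ℕ} (hr : (m + 1) * n ≤ r) {B : ℝ}
      (hB : ∑ l ∈ Finset.Ico (r - n) r, c l ≤ B) : n * c r ≤ θ * B / (m + 1) := by
    rw [le_div_iff₀ (by positivity)]
    calc n * c r * (m + 1) = ((m + 1) * n : ℕ) * c r := by push_cast; ring
      _ ≤ r * c r := by gcongr; exact hc r
      _ ≤ θ * B := by rw [hrec]; gcongr
  have window {r : ℕ} {B : ℝ} (hB : 0 ≤ B) (h : ∀ l, r - n ≤ l → n * c l ≤ B) :
      ∑ l ∈ Finset.Ico (r - n) r, c l ≤ B := by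
    have hn' : (0 : ℝ) < n := by exact_mod_cast hn
    refine le_of_mul_le_mul_left ?_ hn'
    calc n * ∑ l ∈ Finset.Ico (r - n) r, c l = ∑ l ∈ Finset.Ico (r - n) r, n * c l :=
          Finset.mul_sum _ _ _
      _ ≤ (Finset.Ico (r - n) r).card • B :=
          Finset.sum_le_card_nsmul _ _ _ fun l hl => h l (Finset.mem_Ico.mp hl).1
      _ ≤ n * B := by
          rw [nsmul_eq_mul, Nat.card_Ico]; gcongr; exact_mod_cast (by omega : r - (r - n) ≤ n)
  induction m, hm using Nat.le_induction generalizing r with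
  | base => simpa using step (m := 0) (by simpa using hr) (hmass _)
  | succ m hm ih =>
    have hB := step hr (window (by positivity) fun l hl => ih (by rw [add_one_mul] at hr; omega))
    convert hB using 1
    rw [Nat.factorial_succ, pow_succ]; push_cast; field_simp

lemma tendsto_pow_div_factorial_mul_pow (θ : ℝ) (N : ℕ) :
    Tendsto (fun m : ℕ => θ ^ m / m.factorial * ((m : ℝ) + 1) ^ N) atTop (𝓝 0) := by
  have hpoly : Tendsto (fun m : ℕ => 2 * (((m + 1 : ℕ) : ℝ) ^ N / 2 ^ (m + 1))) atTop (𝓝 0) := by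
    simpa using ((tendsto_pow_const_div_const_pow_of_one_lt N one_lt_two).comp
      (tendsto_add_atTop_nat 1)).const_mul 2
  have hprod := (FloorSemiring.tendsto_pow_div_factorial_atTop (2 * θ)).mul hpoly
  rw [zero_mul] at hprod
  refine hprod.congr fun m => ?_
  push_cast
  rw [mul_pow, pow_succ]
  field_simp

lemma tendsto_mul_rpow_atTop_of_le_pow_div_factorial {θ : ℝ} {g : ℝ → ℝ}
    (hg0 : ∀ᶠ y in atTop, 0 ≤ g y) (hg : ∀ᶠ y in atTop, g y ≤ θ ^ ⌊y⌋₊ / (⌊y⌋₊).factorial)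
    (s : ℝ) : Tendsto (fun y => g y * y ^ s) atTop (𝓝 0) := by
  refine squeeze_zero' ?_ ?_
    ((tendsto_pow_div_factorial_mul_pow θ ⌈s⌉₊).comp tendsto_nat_floor_atTop)
  · filter_upwards [hg0, eventually_ge_atTop 0] with y h0 hy
    exact mul_nonneg h0 (Real.rpow_nonneg hy s)
  · filter_upwards [hg0, hg, eventually_ge_atTop 1] with y h0 hle hy
    have hpow : y ^ s ≤ ((⌊y⌋₊ : ℝ) + 1) ^ ⌈s⌉₊ :=
      calc y ^ s ≤ y ^ (⌈s⌉₊ : ℝ) := Real.rpow_le_rpow_of_exponent_le hy (Nat.le_ceil s)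
        _ = y ^ ⌈s⌉₊ := Real.rpow_natCast y _
        _ ≤ ((⌊y⌋₊ : ℝ) + 1) ^ ⌈s⌉₊ :=
          pow_le_pow_left₀ (by linarith) (Nat.lt_floor_add_one y).le _
    exact mul_le_mul hle hpow (Real.rpow_nonneg (by linarith) s) (h0.trans hle)

lemma tendsto_comp_inv_mul_rpow_div_pow {g : ℝ → ℝ} {a : ℝ} (k : ℕ)
    (h : Tendsto (fun y => g y * y ^ (k - a)) atTop (𝓝 0)) :
    Tendsto (fun δ => g (1 / δ) * δ ^ a / δ ^ k) (𝓝[>] 0) (𝓝 0) := by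
  refine (h.comp tendsto_inv_nhdsGT_zero).congr' ?_
  filter_upwards [self_mem_nhdsWithin] with δ (hδ : 0 < δ)
  rw [Function.comp_apply, one_div, Real.inv_rpow hδ.le, ← Real.rpow_neg hδ.le, mul_div_assoc,
    ← Real.rpow_natCast, ← Real.rpow_sub hδ, neg_sub]

/-- The limiting density `p_θ` of `T_{0n}/n` (for `T_{0n} = ∑ j Z_j` with `Z_j`
independent Poisson(θ/j)) satisfies `sup_{y ≥ m} p_θ(y) ≤ θ^m/m!` for every
positive integer `m`; in particular `p_θ(1/δ) δ^{θ-1} → 0` super-polynomially fast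
as `δ → 0⁺`. -/
theorem ptheta_tail_bound (θ : ℝ) (hθ : 0 < θ)
    (μT : ℕ → Measure ℕ) (hprob : ∀ n, IsProbabilityMeasure (μT n))
    (hpgf : ∀ n : ℕ, 1 ≤ n → ∀ z ∈ Set.Ioc (0 : ℝ) 1,
      ∑' k : ℕ, z ^ k * (μT n {k}).toReal
        = ∏ j ∈ Finset.Icc 1 n, Real.exp ((θ / j) * (z ^ j - 1)))
    (p : ℝ → ℝ)
    (hp : ∀ y : ℝ, 0 < y → ∀ r : ℕ → ℕ,
      Tendsto (fun n : ℕ => (r n : ℝ) / n) atTop (nhds y) →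
      Tendsto (fun n : ℕ => (n : ℝ) * (μT n {r n}).toReal) atTop (nhds (p y))) :
    (∀ m : ℕ, 1 ≤ m → ∀ y : ℝ, (m : ℝ) ≤ y → p y ≤ θ ^ m / m.factorial) ∧
      ∀ k : ℕ,
        Tendsto (fun δ : ℝ => p (1 / δ) * δ ^ (θ - 1) / δ ^ k)
          (nhdsWithin 0 (Set.Ioi 0)) (nhds 0) := by
  have hrec (n : ℕ) (hn : 1 ≤ n) (r : ℕ) :
      r * (μT n {r}).toReal = θ * ∑ l ∈ Finset.Ico (r - n) r, (μT n {l}).toReal :=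
    mul_eq_mul_sum_Ico_of_tsum_eq_prod_exp (c := fun k => (μT n {k}).toReal)
      (fun k => by rw [abs_of_nonneg ENNReal.toReal_nonneg]; exact measureReal_le_one (μ := μT n))
      (fun z hz => by simpa only [mul_comm] using hpgf n hn z (Ioo_subset_Ioc_self hz)) r
  have hlim (y : ℝ) (hy : 0 < y) :=
    hp y hy _ ((tendsto_nat_floor_mul_div_atTop hy.le).comp tendsto_natCast_atTop_atTop)
  have htail (m : ℕ) (hm : 1 ≤ m) (y : ℝ) (hmy : (m : ℝ) ≤ y) : p y ≤ θ ^ m / m.factorial := by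
    refine le_of_tendsto (hlim y (by linarith [(Nat.one_le_cast (α := ℝ)).mpr hm])) ?_
    filter_upwards [eventually_ge_atTop 1] with n hn
    exact mul_le_pow_div_factorial_of_recurrence hθ.le hn (fun _ => ENNReal.toReal_nonneg)
      (fun s => (sum_measureReal_singleton s).trans_le measureReal_le_one) (hrec n hn) hm
      (Nat.le_floor (by push_cast; gcongr))
  refine ⟨htail, fun k => tendsto_comp_inv_mul_rpow_div_pow k ?_⟩
  exact tendsto_mul_rpow_atTop_of_le_pow_div_factorial
    ((eventually_gt_atTop 0).mono fun y hy => ge_of_tendsto' (hlim y hy) fun n => by positivity)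
    ((eventually_ge_atTop 1).mono fun y hy =>
      htail _ (Nat.le_floor (by simpa using hy)) y (Nat.floor_le (by linarith)))
    _
end

section
/- As n → ∞ with m ≥ 0 fixed, exp(θ·Σ_{ℓ=1}^n (e^{−ℓm/n} − 1)/ℓ) converges to ∫_0^∞ e^{−my}·p_θ(y)dy, the Laplace transform at m of the density p_θ. -/
/-!
Evaluate the generating function of `T_{0n}` at `z = e^{-m/n}`: the left side becomes
`E[e^{-m T_{0n}/n}]`, and the product of Poisson factors becomes
`exp(θ ∑_{ℓ ≤ n} (e^{-ℓm/n} - 1)/ℓ)`. Since `y ↦ e^{-my}` is bounded and continuous on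
`[0, ∞)`, weak convergence of `T_{0n}/n` sends the left side to the Laplace transform of `p_θ`.
-/

open MeasureTheory Filter Set

/-- `y ↦ e^{-my}`, extended by `1` to the negative axis so that it is continuous on `ℝ`. -/
noncomputable def laplaceKernel (m x : ℝ) : ℝ := Real.exp (-(m * max x 0))

theorem continuous_laplaceKernel (m : ℝ) : Continuous (laplaceKernel m) := by
  unfold laplaceKernel
  fun_prop

theorem abs_laplaceKernel_le_one {m : ℝ} (hm : 0 ≤ m) (x : ℝ) : |laplaceKernel m x| ≤ 1 := by
  rw [laplaceKernel, abs_of_pos (Real.exp_pos _), Real.exp_le_one_iff, neg_nonpos]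
  exact mul_nonneg hm (le_max_right _ _)

theorem laplaceKernel_of_nonneg (m : ℝ) {x : ℝ} (hx : 0 ≤ x) :
    laplaceKernel m x = Real.exp (-(m * x)) := by
  rw [laplaceKernel, max_eq_left hx]

theorem exp_neg_div_pow (m x : ℝ) (k : ℕ) : Real.exp (-m / x) ^ k = Real.exp (-(k * m) / x) := by
  rw [← Real.exp_nat_mul]
  ring_nf

theorem laplaceKernel_natCast_div (m : ℝ) (k n : ℕ) :
    laplaceKernel m (k / n) = Real.exp (-m / n) ^ k := by
  rw [laplaceKernel_of_nonneg m (by positivity), exp_neg_div_pow]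
  ring_nf

theorem integral_pow_eq_tsum {μ : Measure ℕ} [IsFiniteMeasure μ] {z : ℝ} (hz : |z| ≤ 1) :
    ∫ k, z ^ k ∂μ = ∑' k : ℕ, z ^ k * (μ {k}).toReal := by
  have hint : Integrable (fun k : ℕ => z ^ k) μ :=
    (integrable_const (1 : ℝ)).mono (by fun_prop) (Eventually.of_forall fun k => by
      simpa [abs_pow] using pow_le_one₀ (abs_nonneg z) hz)
  rw [integral_countable hint]
  exact tsum_congr fun k => mul_comm _ _

theorem prod_exp_poisson_factor_eq (θ m : ℝ) (n : ℕ) :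
    ∏ j ∈ Finset.Icc 1 n, Real.exp ((θ / j) * (Real.exp (-m / n) ^ j - 1))
      = Real.exp (θ * ∑ ℓ ∈ Finset.Icc 1 n, (Real.exp (-(ℓ * m) / n) - 1) / ℓ) := by
  rw [← Real.exp_sum, Finset.mul_sum]
  refine congrArg Real.exp (Finset.sum_congr rfl fun j _ => ?_)
  rw [exp_neg_div_pow]
  ring

theorem exp_sum_tendsto_laplace_transform_general (θ : ℝ) (m : ℝ) (hm : 0 ≤ m)
    (μT : ℕ → Measure ℕ) (hprob : ∀ n, IsProbabilityMeasure (μT n))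
    (hpgf : ∀ n : ℕ, 1 ≤ n → ∀ z ∈ Set.Ioc (0 : ℝ) 1,
      ∑' k : ℕ, z ^ k * (μT n {k}).toReal
        = ∏ j ∈ Finset.Icc 1 n, Real.exp ((θ / j) * (z ^ j - 1)))
    (p : ℝ → ℝ)
    (hweak : ∀ f : ℝ → ℝ, Continuous f → (∃ Cb, ∀ x, |f x| ≤ Cb) →
      Tendsto (fun n : ℕ => ∫ k, f ((k : ℝ) / n) ∂(μT n)) atTop
        (nhds (∫ y in Set.Ioi (0 : ℝ), f y * p y))) :
    Tendsto
      (fun n : ℕ =>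
        Real.exp (θ * ∑ ℓ ∈ Finset.Icc 1 n, (Real.exp (-(ℓ * m) / n) - 1) / ℓ))
      atTop (nhds (∫ y in Set.Ioi (0 : ℝ), Real.exp (-(m * y)) * p y)) := by
  have hlim := hweak (laplaceKernel m) (continuous_laplaceKernel m)
    ⟨1, abs_laplaceKernel_le_one hm⟩
  rw [setIntegral_congr_fun measurableSet_Ioi fun y hy => by
    rw [laplaceKernel_of_nonneg m (le_of_lt hy)]] at hlim
  refine hlim.congr' ?_
  filter_upwards [eventually_ge_atTop 1] with n hn
  have hz : Real.exp (-m / n) ∈ Ioc (0 : ℝ) 1 :=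
    ⟨Real.exp_pos _, Real.exp_le_one_iff.mpr (div_nonpos_of_nonpos_of_nonneg (by linarith)
      n.cast_nonneg)⟩
  have : IsProbabilityMeasure (μT n) := hprob n
  simp_rw [laplaceKernel_natCast_div]
  rw [integral_pow_eq_tsum (by rw [abs_of_pos hz.1]; exact hz.2), hpgf n hn _ hz,
    prod_exp_poisson_factor_eq]

/-- As `n → ∞` with `m ≥ 0` fixed, `exp(θ ∑_{ℓ=1}^n (e^{−ℓm/n} − 1)/ℓ)` converges to
`∫_0^∞ e^{−my} p_θ(y) dy`, the Laplace transform of the limiting density `p_θ` of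
`T_{0n}/n`, where `T_{0n} = ∑ j Z_j` with `Z_j` independent Poisson(θ/j), whose law
is characterized by `E[z^{T_{0n}}] = ∏_{j=1}^n exp((θ/j)(z^j−1))`. -/
theorem exp_sum_tendsto_laplace_transform (θ : ℝ) (hθ : 0 < θ) (m : ℝ) (hm : 0 ≤ m)
    (μT : ℕ → Measure ℕ) (hprob : ∀ n, IsProbabilityMeasure (μT n))
    (hpgf : ∀ n : ℕ, 1 ≤ n → ∀ z ∈ Set.Ioc (0 : ℝ) 1,
      ∑' k : ℕ, z ^ k * (μT n {k}).toReal
        = ∏ j ∈ Finset.Icc 1 n, Real.exp ((θ / j) * (z ^ j - 1)))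
    (p : ℝ → ℝ) (hpmeas : Measurable p) (hp0 : ∀ y, 0 ≤ p y)
    (hweak : ∀ f : ℝ → ℝ, Continuous f → (∃ Cb, ∀ x, |f x| ≤ Cb) →
      Tendsto (fun n : ℕ => ∫ k, f ((k : ℝ) / n) ∂(μT n)) atTop
        (nhds (∫ y in Set.Ioi (0 : ℝ), f y * p y))) :
    Tendsto
      (fun n : ℕ =>
        Real.exp (θ * ∑ ℓ ∈ Finset.Icc 1 n, (Real.exp (-(ℓ * m) / n) - 1) / ℓ))
      atTop (nhds (∫ y in Set.Ioi (0 : ℝ), Real.exp (-(m * y)) * p y)) :=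
  exp_sum_tendsto_laplace_transform_general θ m hm μT hprob hpgf p hweak
end
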